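/- Let K₁ := ℚ[Y]/(Y⁵ − Y + 1), the number field defined by the irreducible polynomial Y⁵ − Y + 1 over ℚ. Then the discriminant of K₁ equals 2869 = 19 · 151. -/

import Mathlib

/-!
A power basis `1, θ, …, θ⁴` of `K`, with `θ` a root of `f = X⁵ - X + 1`, consists of algebraic
integers and has discriminant `N(f'(θ)) = 2869`. Since `θ f'(θ) = 4θ - 5`, this norm is
`N(4θ - 5) / N(θ) = -4⁵ f(5/4) / (-1)`. The discriminant of any basis of algebraic integers is
`c² · disc K` for an integer `c`, and `2869 = 19 · 151` is squarefree, so `c = ±1`.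
-/

open Polynomial

theorem Algebra.norm_algebraMap_sub_gen {R S : Type*} [CommRing R] [Ring S] [Algebra R S]
    (pb : PowerBasis R S) (r : R) :
    Algebra.norm R (algebraMap R S r - pb.gen) = (minpoly R pb.gen).eval r := by
  rw [Algebra.norm_eq_matrix_det pb.basis, map_sub, AlgHom.commutes, ← charpoly_leftMulMatrix,
    Matrix.eval_charpoly, Matrix.algebraMap_eq_diagonal]
  rfl

namespace NumberField

variable {K : Type*} [Field K] [NumberField K] {ι : Type*} [Fintype ι] [DecidableEq ι]

theorem exists_discr_basis_eq_sq_mul_discr (b : Module.Basis ι ℚ K)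
    (hb : ∀ i, IsIntegral ℤ (b i)) : ∃ c : ℤ, Algebra.discr ℚ b = c ^ 2 * discr K := by
  let b₀ := (integralBasis K).reindex ((integralBasis K).indexEquiv b)
  have hcoeff : ∀ i j, IsIntegral ℤ (b₀.toMatrix b i j) := by
    intro i j
    obtain ⟨x, hx⟩ : ∃ x : 𝓞 K, algebraMap (𝓞 K) K x = b j := ⟨⟨b j, hb j⟩, rfl⟩
    rw [Module.Basis.toMatrix_apply, Module.Basis.repr_reindex_apply, ← hx,
      integralBasis_repr_apply]
    exact isIntegral_algebraMap
  obtain ⟨c, hc⟩ := IsIntegrallyClosed.isIntegral_iff.1 (IsIntegral.det hcoeff)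
  refine ⟨c, ?_⟩
  rw [← b₀.toMatrix_map_vecMul b, Algebra.discr_of_matrix_vecMul, ← hc, Module.Basis.coe_reindex,
    Algebra.discr_reindex, coe_discr]
  simp

theorem discr_eq_of_discr_basis_squarefree (b : Module.Basis ι ℚ K)
    (hb : ∀ i, IsIntegral ℤ (b i)) {d : ℤ} (hd : Squarefree d) (h : Algebra.discr ℚ b = d) :
    discr K = d := by
  obtain ⟨c, hc⟩ := exists_discr_basis_eq_sq_mul_discr b hb
  have hcd : c ^ 2 * discr K = d := by exact_mod_cast hc.symm.trans h
  have hc1 : c ^ 2 = 1 := by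
    rcases Int.isUnit_iff.1 (hd c ⟨discr K, by rw [← hcd]; ring⟩) with rfl | rfl <;> rfl
  rw [← hcd, hc1, one_mul]

end NumberField

namespace PowerBasis

variable {K : Type*} [Field K] [CharZero K] (pb : PowerBasis ℚ K)

theorem gen_pow_five_of_minpoly_eq (hpb : minpoly ℚ pb.gen = X ^ 5 - X + 1) :
    pb.gen ^ 5 = pb.gen - 1 := by
  have h := minpoly.aeval ℚ pb.gen
  rw [hpb] at h
  simp only [map_add, map_sub, map_pow, aeval_X, map_one] at h
  linear_combination h

theorem isIntegral_int_gen_of_minpoly_eq (hpb : minpoly ℚ pb.gen = X ^ 5 - X + 1) :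
    IsIntegral ℤ pb.gen :=
  ⟨X ^ 5 - X + 1, by monicity!, by
    simp only [eval₂_add, eval₂_sub, eval₂_pow, eval₂_X, eval₂_one]
    linear_combination pb.gen_pow_five_of_minpoly_eq hpb⟩

theorem dim_eq_five_of_minpoly_eq (hpb : minpoly ℚ pb.gen = X ^ 5 - X + 1) : pb.dim = 5 := by
  rw [← pb.natDegree_minpoly, hpb]
  compute_degree!

theorem norm_aeval_gen_derivative_of_minpoly_eq (hpb : minpoly ℚ pb.gen = X ^ 5 - X + 1) :
    Algebra.norm ℚ (aeval pb.gen (minpoly ℚ pb.gen).derivative) = 2869 := by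
  have hdim := pb.dim_eq_five_of_minpoly_eq hpb
  have hgen : Algebra.norm ℚ pb.gen = -1 := by
    rw [Algebra.PowerBasis.norm_gen_eq_coeff_zero_minpoly, hpb, hdim]
    norm_num
  have hder : aeval pb.gen (minpoly ℚ pb.gen).derivative = 5 * pb.gen ^ 4 - 1 := by
    norm_num [hpb]
  have hmul : pb.gen * (5 * pb.gen ^ 4 - 1) =
      algebraMap ℚ K (-4) * (algebraMap ℚ K (5 / 4) - pb.gen) := by
    simp only [map_neg, map_div₀, map_ofNat]
    linear_combination 5 * pb.gen_pow_five_of_minpoly_eq hpb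
  have h := congrArg (Algebra.norm ℚ) hmul
  rw [map_mul, map_mul, hgen, Algebra.norm_algebraMap, Algebra.norm_algebraMap_sub_gen, hpb,
    pb.finrank, hdim] at h
  norm_num at h
  rw [hder]
  linarith

theorem discr_basis_of_minpoly_eq (hpb : minpoly ℚ pb.gen = X ^ 5 - X + 1) :
    Algebra.discr ℚ pb.basis = 2869 := by
  have := pb.finite
  rw [Algebra.discr_powerBasis_eq_norm, pb.norm_aeval_gen_derivative_of_minpoly_eq hpb,
    pb.finrank, pb.dim_eq_five_of_minpoly_eq hpb]
  norm_num

end PowerBasis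

theorem squarefree_2869 : Squarefree (2869 : ℤ) := by
  have : Squarefree 2869 := by
    rw [Nat.squarefree_iff_nodup_primeFactorsList (by norm_num),
      show Nat.primeFactorsList 2869 = [19, 151] by simp]
    simp
  exact_mod_cast Int.squarefree_natCast.2 this

/-- The number field `K₁ = ℚ[Y]/(Y⁵ − Y + 1)` has discriminant `2869 = 19·151`. -/
theorem stmt7 (K : Type*) [Field K] [NumberField K]
    (e : K ≃ₐ[ℚ] AdjoinRoot (X ^ 5 - X + 1 : ℚ[X])) :
    NumberField.discr K = 2869 := by
  have hf : (X ^ 5 - X + 1 : ℚ[X]).Monic := by monicity!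
  let pb := (AdjoinRoot.powerBasis hf.ne_zero).map e.symm
  have hpb : minpoly ℚ pb.gen = X ^ 5 - X + 1 := by
    rw [PowerBasis.map_gen, minpoly.algEquiv_eq, AdjoinRoot.minpoly_powerBasis_gen_of_monic hf]
  refine NumberField.discr_eq_of_discr_basis_squarefree pb.basis (fun i => ?_) squarefree_2869
    (pb.discr_basis_of_minpoly_eq hpb)
  rw [pb.coe_basis]
  exact (pb.isIntegral_int_gen_of_minpoly_eq hpb).pow _
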